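/- Fix α ∈ (0, 1/2) and set c := 2(1 − 2α)/ln((1−α)/α) (natural logarithm). Then for every f ∈ [0,1], c·(1 + h(f)) − 2f(1−f) ≤ c·(1 + h(α)) − 2α(1−α), where h is the binary entropy in nats (h measured so that h(1/2) = ln 2). Equivalently, the function f ↦ c·h(f) − 2f(1−f) on [0,1] attains its maximum at f = α. -/

import Mathlib

/-- The binary entropy function in nats, with `0 · ln 0 = 0`. -/
noncomputable def binEnt (p : ℝ) : ℝ :=
  -(p * Real.log p) - (1 - p) * Real.log (1 - p)

/-!
The derivative of `F f = c · h f - 2 f (1 - f)` is `c ℓ(f) - 2 (1 - 2f)` with `ℓ(f) = ln ((1 - f) / f)`,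
which on `(0, 1/2)` factors as `ℓ(f) (c - κ(f))` with `κ(f) = 2 (1 - 2f) / ℓ(f)`. Since
`2 ln t ≤ t - 1/t` for `t ≥ 1` (that is, `u ≤ sinh u` for `u ≥ 0`), `κ` is increasing on `(0, 1/2)`.
Hence for `c = κ(α)` the function `F` increases on `[0, α]` and decreases on `[α, 1/2]`, and the
symmetry `h (1 - f) = h f` takes care of `[1/2, 1]`.
-/

open Real Set

lemma two_mul_log_le_sub_inv {t : ℝ} (ht : 1 ≤ t) : 2 * log t ≤ t - t⁻¹ := by
  have h := self_le_sinh_iff.2 (log_nonneg ht)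
  rw [sinh_eq, exp_neg, exp_log (by linarith)] at h
  linarith

lemma binEnt_eq_binEntropy : binEnt = binEntropy := by
  ext p
  simp only [binEnt, binEntropy, log_inv]
  ring

lemma log_one_sub_sub_log_pos {x : ℝ} (hx : x ∈ Ioo (0 : ℝ) (1 / 2)) :
    0 < log (1 - x) - log x :=
  sub_pos.2 (log_lt_log hx.1 (by linarith [hx.2]))

/-- The coefficient `c` for which `x` is a stationary point of `f ↦ c · h(f) - 2f(1 - f)`. -/
noncomputable def criticalCoeff (x : ℝ) : ℝ :=
  2 * (1 - 2 * x) / (log (1 - x) - log x)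

lemma hasDerivAt_criticalCoeff {x : ℝ} (hx : x ∈ Ioo (0 : ℝ) (1 / 2)) :
    HasDerivAt criticalCoeff
      (2 * ((1 - 2 * x) / (x * (1 - x)) - 2 * (log (1 - x) - log x)) /
        (log (1 - x) - log x) ^ 2) x := by
  obtain ⟨hx0, hx2⟩ := hx
  have hnum : HasDerivAt (fun f : ℝ => 2 * (1 - 2 * f)) (-4) x :=
    ((((hasDerivAt_id' x).const_mul 2).const_sub 1).const_mul 2).congr_deriv (by norm_num)
  have hden : HasDerivAt (fun f : ℝ => log (1 - f) - log f) (-(1 - x)⁻¹ - x⁻¹) x := by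
    have h1 := ((hasDerivAt_id x).const_sub 1).log (by simp; linarith)
    exact (h1.congr_deriv (by simp [neg_div])).sub (hasDerivAt_log hx0.ne')
  refine (hnum.div hden (log_one_sub_sub_log_pos ⟨hx0, hx2⟩).ne').congr_deriv ?_
  have : 1 - x ≠ 0 := by linarith
  field_simp
  ring

lemma monotoneOn_criticalCoeff : MonotoneOn criticalCoeff (Ioo (0 : ℝ) (1 / 2)) := by
  refine monotoneOn_of_hasDerivWithinAt_nonneg (convex_Ioo _ _)
    (fun x hx => (hasDerivAt_criticalCoeff hx).continuousAt.continuousWithinAt)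
    (fun x hx => (hasDerivAt_criticalCoeff (by rwa [interior_Ioo] at hx)).hasDerivWithinAt) ?_
  intro x hx
  rw [interior_Ioo] at hx
  obtain ⟨hx0, hx2⟩ := hx
  have hkey := two_mul_log_le_sub_inv (t := (1 - x) / x) (by rw [le_div_iff₀ hx0]; linarith)
  have ht : (1 - x) / x - ((1 - x) / x)⁻¹ = (1 - 2 * x) / (x * (1 - x)) := by
    have : 1 - x ≠ 0 := by linarith
    field_simp
    ring
  rw [ht, log_div (by linarith) hx0.ne'] at hkey
  exact div_nonneg (by linarith) (sq_nonneg _)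

lemma hasDerivAt_entropy_objective (c : ℝ) {x : ℝ} (hx0 : x ≠ 0) (hx1 : x ≠ 1) :
    HasDerivAt (fun f => c * binEntropy f - 2 * f * (1 - f))
      (c * (log (1 - x) - log x) - 2 * (1 - 2 * x)) x := by
  have hq : HasDerivAt (fun f : ℝ => 2 * f * (1 - f)) (2 * (1 - 2 * x)) x := by
    have := ((hasDerivAt_id x).const_mul 2).mul ((hasDerivAt_id x).const_sub 1)
    exact this.congr_deriv (by simp; ring)
  exact ((hasDerivAt_binEntropy hx0 hx1).const_mul c).sub hq

lemma entropy_objective_deriv_eq {c x : ℝ} (hx : x ∈ Ioo (0 : ℝ) (1 / 2)) :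
    c * (log (1 - x) - log x) - 2 * (1 - 2 * x) =
      (log (1 - x) - log x) * (c - criticalCoeff x) := by
  have := (log_one_sub_sub_log_pos hx).ne'
  rw [criticalCoeff]
  field_simp

lemma isMaxOn_entropy_objective {α : ℝ} (hα : α ∈ Ioo (0 : ℝ) (1 / 2)) :
    IsMaxOn (fun f => criticalCoeff α * binEntropy f - 2 * f * (1 - f)) (Icc 0 1) α := by
  set F := fun f => criticalCoeff α * binEntropy f - 2 * f * (1 - f)
  have hFcont : Continuous F := by fun_prop
  have hF' : ∀ x ∈ Ioo (0 : ℝ) (1 / 2), ∀ s, HasDerivWithinAt F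
      ((log (1 - x) - log x) * (criticalCoeff α - criticalCoeff x)) s x := fun x hx s =>
    entropy_objective_deriv_eq hx ▸
      (hasDerivAt_entropy_objective _ hx.1.ne' (by linarith [hx.2])).hasDerivWithinAt
  have hmono : MonotoneOn F (Icc 0 α) := by
    refine monotoneOn_of_hasDerivWithinAt_nonneg (convex_Icc _ _) hFcont.continuousOn
      (fun x hx => hF' x ?_ _) fun x hx => ?_ <;> rw [interior_Icc] at hx
    · exact ⟨hx.1, hx.2.trans hα.2⟩
    · have hx' : x ∈ Ioo (0 : ℝ) (1 / 2) := ⟨hx.1, hx.2.trans hα.2⟩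
      exact mul_nonneg (log_one_sub_sub_log_pos hx').le
        (sub_nonneg.2 (monotoneOn_criticalCoeff hx' hα hx.2.le))
  have hanti : AntitoneOn F (Icc α (1 / 2)) := by
    refine antitoneOn_of_hasDerivWithinAt_nonpos (convex_Icc _ _) hFcont.continuousOn
      (fun x hx => hF' x ?_ _) fun x hx => ?_ <;> rw [interior_Icc] at hx
    · exact ⟨hα.1.trans hx.1, hx.2⟩
    · have hx' : x ∈ Ioo (0 : ℝ) (1 / 2) := ⟨hα.1.trans hx.1, hx.2⟩
      exact mul_nonpos_of_nonneg_of_nonpos (log_one_sub_sub_log_pos hx').le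
        (sub_nonpos.2 (monotoneOn_criticalCoeff hα hx' hx.1.le))
  have hhalf : ∀ f ∈ Icc (0 : ℝ) (1 / 2), F f ≤ F α := by
    rintro f ⟨hf0, hf2⟩
    rcases le_total f α with h | h
    · exact hmono ⟨hf0, h⟩ ⟨hf0.trans h, le_rfl⟩ h
    · exact hanti ⟨le_rfl, hα.2.le⟩ ⟨h, hf2⟩ h
  rintro f ⟨hf0, hf1⟩
  rcases le_total f (1 / 2) with h | h
  · exact hhalf f ⟨hf0, h⟩
  · have hsymm : F f = F (1 - f) := by simp only [F, binEntropy_one_sub]; ring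
    rw [mem_ofPred_eq, hsymm]
    exact hhalf (1 - f) ⟨by linarith, by linarith⟩

/-- For `α ∈ (0,1/2)` and `c := 2(1−2α)/ln((1−α)/α)`, the function
`f ↦ c·h(f) − 2f(1−f)` on `[0,1]` attains its maximum at `f = α`. -/
theorem stmt_13 (α : ℝ) (hα : α ∈ Set.Ioo (0 : ℝ) (1 / 2))
    (c : ℝ) (hc : c = 2 * (1 - 2 * α) / Real.log ((1 - α) / α)) :
    ∀ f ∈ Set.Icc (0 : ℝ) 1,
      c * binEnt f - 2 * f * (1 - f) ≤ c * binEnt α - 2 * α * (1 - α) := by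
  rw [log_div (by linarith [hα.2]) hα.1.ne', ← criticalCoeff] at hc
  subst hc
  rw [binEnt_eq_binEntropy]
  exact isMaxOn_entropy_objective hα
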